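/- arXiv:1711.04319 — 2 statements merged into one kernel-verified Lean document; each statement's English description precedes it below -/
import Mathlib

section
/- Strong statistical stability: Under assumptions (LR0)–(LR3) of the linear response theorem (fixed probability measures f_δ ∈ BV with uniformly bounded BV norm, mixing and regularization of L₀, and ‖(L₀ − L_δ)f_δ‖₁ ≤ K'δ), one has lim_{δ→0} ‖f_δ − f₀‖₁ = 0; more precisely ‖f_δ − f₀‖₁ ≤ 2C e^{λN} + ε_δ N for every N, where ε_δ = ‖(L₀ − L_δ)f_δ‖₁ and C, λ < 0 are the exponential contraction constants of L₀ on zero-average L¹ densities. -/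
open MeasureTheory Set Filter
open scoped ENNReal NNReal

noncomputable section

/-- The unit interval `[0,1]`. -/
abbrev II : Set ℝ := Set.Icc (0:ℝ) 1

/-- Lebesgue measure restricted to `[0,1]`. -/
abbrev volI : MeasureTheory.Measure ℝ := MeasureTheory.volume.restrict II

/-- The reflecting boundary map `π(x) = min_{i ∈ ℤ} |x - 2i|`. -/
def reflMap (x : ℝ) : ℝ := ⨅ i : ℤ, |x - 2 * (i : ℝ)|

/-- The Wasserstein–Kantorovich norm `‖μ‖_W = sup {∫ g dμ : ‖g‖_∞ ≤ 1, Lip(g) ≤ 1}`. -/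
def Wnorm (m : MeasureTheory.SignedMeasure ℝ) : ℝ :=
  ⨆ g : {g : ℝ → ℝ // (∀ x, |g x| ≤ 1) ∧ LipschitzWith 1 g},
    (∫ x, g.1 x ∂m.toJordanDecomposition.posPart -
     ∫ x, g.1 x ∂m.toJordanDecomposition.negPart)

/-- The total variation (`L¹`) norm of a signed measure. -/
def tvNorm (m : MeasureTheory.SignedMeasure ℝ) : ℝ :=
  (m.totalVariation Set.univ).toReal

/-- The bounded variation norm `‖g‖_BV = ‖g‖₁ + Var_{[0,1]}(g)` of a function on `[0,1]`. -/
def bvNorm (g : ℝ → ℝ) : ℝ :=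
  (∫ x in II, |g x|) + (eVariationOn g II).toReal

/-- `m` is the absolutely continuous measure with density `h`, supported in `[0,1]`. -/
def IsL1Density (m : MeasureTheory.SignedMeasure ℝ) (h : ℝ → ℝ) : Prop :=
  MeasureTheory.Integrable h MeasureTheory.volume ∧ (∀ x, x ∉ II → h x = 0) ∧
    m = MeasureTheory.volume.withDensityᵥ h

/-- `m` has a bounded variation density `h` on `[0,1]`. -/
def IsBVDensity (m : MeasureTheory.SignedMeasure ℝ) (h : ℝ → ℝ) : Prop :=
  IsL1Density m h ∧ eVariationOn h II ≠ ⊤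

/-- The signed measure with (zero-extended) density `f` w.r.t. Lebesgue measure. -/
def densSM (f : ℝ → ℝ) : MeasureTheory.SignedMeasure ℝ :=
  MeasureTheory.volume.withDensityᵥ f

/-- Convolution of two (positive) measures on `ℝ`. -/
def posConv (a b : MeasureTheory.Measure ℝ) : MeasureTheory.Measure ℝ :=
  (a.prod b).map (fun p => p.1 + p.2)

instance (a b : MeasureTheory.Measure ℝ) [MeasureTheory.IsFiniteMeasure a]
    [MeasureTheory.IsFiniteMeasure b] : MeasureTheory.IsFiniteMeasure (posConv a b) := by
  unfold posConv; infer_instance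

/-- Convolution of two finite signed measures, via Jordan decomposition. -/
def mConv (a b : MeasureTheory.SignedMeasure ℝ) : MeasureTheory.SignedMeasure ℝ :=
  (posConv a.toJordanDecomposition.posPart b.toJordanDecomposition.posPart +
    posConv a.toJordanDecomposition.negPart b.toJordanDecomposition.negPart).toSignedMeasure -
  (posConv a.toJordanDecomposition.posPart b.toJordanDecomposition.negPart +
    posConv a.toJordanDecomposition.negPart b.toJordanDecomposition.posPart).toSignedMeasure

/-- The reflecting-boundary convolution `a ∗̂ b = π_*(a ∗ b)`. -/
def reflConvM (a b : MeasureTheory.SignedMeasure ℝ) : MeasureTheory.SignedMeasure ℝ :=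
  (mConv a b).map reflMap

/-- The annealed transfer operator of the system with additive noise:
`L_{ρ,T} m = ρ ∗̂ (L_T m)` where `L_T` is the pushforward by `T`. -/
def annealedM (ρ : ℝ → ℝ) (T : ℝ → ℝ) (m : MeasureTheory.SignedMeasure ℝ) :
    MeasureTheory.SignedMeasure ℝ :=
  reflConvM (densSM ρ) (m.map T)

/-- `T` is a nonsingular Borel self-map of `[0,1]`. -/
def Nonsingular (T : ℝ → ℝ) : Prop :=
  Measurable T ∧ Set.MapsTo T II II ∧
    ∀ A : Set ℝ, MeasurableSet A → MeasureTheory.volume A = 0 → volI (T ⁻¹' A) = 0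

/-- A Markov operator: positive and total-mass preserving. -/
def IsMarkov (L : MeasureTheory.SignedMeasure ℝ → MeasureTheory.SignedMeasure ℝ) : Prop :=
  (∀ m : MeasureTheory.SignedMeasure ℝ, (∀ A : Set ℝ, 0 ≤ m A) → ∀ A : Set ℝ, 0 ≤ L m A) ∧
  (∀ m : MeasureTheory.SignedMeasure ℝ, L m Set.univ = m Set.univ)

/-- A BV noise kernel which is a probability density on `[0,1]`. -/
def IsBVKernel (ρ : ℝ → ℝ) : Prop :=
  MeasureTheory.Integrable ρ MeasureTheory.volume ∧ (∀ x, x ∉ II → ρ x = 0) ∧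
    (∀ x, 0 ≤ ρ x) ∧ (∫ x, ρ x) = 1 ∧ eVariationOn ρ II ≠ ⊤

/-! Write `f_δ - f₀ = L₀ᴺ (f_δ - f₀) - (L₀ᴺ f_δ - f_δ)`. The first term is the image of a
zero-average density, so its norm is at most `C e^{λN} ‖f_δ - f₀‖₁ ≤ 2 C e^{λN}`. The second
telescopes into the `N` terms `L₀ᵏ (L₀ f_δ - f_δ) = L₀ᵏ ((L₀ - L_δ) f_δ)`, each of norm at most
`ε_δ` because a Markov operator is an `L¹` contraction. Taking `N` large and then `δ` small gives
the limit. -/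

lemma tvNorm_nonneg (s : SignedMeasure ℝ) : 0 ≤ tvNorm s := ENNReal.toReal_nonneg

lemma tvNorm_neg (s : SignedMeasure ℝ) : tvNorm (-s) = tvNorm s := by
  simp [tvNorm, SignedMeasure.totalVariation_neg]

lemma tvNorm_add_le (a b : SignedMeasure ℝ) : tvNorm (a + b) ≤ tvNorm a + tvNorm b := by
  have hvar := VectorMeasure.variation_add_le (μ := a) (ν := b) Set.univ
  simp only [← SignedMeasure.totalVariation_eq_variation, Measure.add_apply] at hvar
  rw [tvNorm, tvNorm, tvNorm, ← ENNReal.toReal_add (measure_ne_top _ _) (measure_ne_top _ _)]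
  exact ENNReal.toReal_mono (by finiteness) hvar

lemma tvNorm_sub_le (a b : SignedMeasure ℝ) : tvNorm (a - b) ≤ tvNorm a + tvNorm b := by
  simpa only [sub_eq_add_neg, tvNorm_neg] using tvNorm_add_le a (-b)

lemma tvNorm_toSignedMeasure (μ : Measure ℝ) [IsFiniteMeasure μ] :
    tvNorm μ.toSignedMeasure = μ.real Set.univ := by
  rw [tvNorm, SignedMeasure.totalVariation_eq_variation, Measure.variation_toSignedMeasure,
    measureReal_def]

lemma tvNorm_of_nonneg {s : SignedMeasure ℝ} (hs : ∀ A, 0 ≤ s A) : tvNorm s = s Set.univ := by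
  have hs' : 0 ≤[Set.univ] s :=
    (VectorMeasure.le_restrict_univ_iff_le _ _).2 (VectorMeasure.le_iff'.2 hs)
  conv_lhs => rw [← SignedMeasure.toMeasureOfZeroLE_toSignedMeasure s hs']
  rw [tvNorm_toSignedMeasure, ← Measure.toSignedMeasure_apply_measurable MeasurableSet.univ,
    SignedMeasure.toMeasureOfZeroLE_toSignedMeasure]

lemma tvNorm_sub_le_two {μ ν : SignedMeasure ℝ} (hμ : ∀ A, 0 ≤ μ A) (hμ1 : μ Set.univ = 1)
    (hν : ∀ A, 0 ≤ ν A) (hν1 : ν Set.univ = 1) : tvNorm (μ - ν) ≤ 2 := by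
  have := tvNorm_sub_le μ ν
  rw [tvNorm_of_nonneg hμ, tvNorm_of_nonneg hν, hμ1, hν1] at this
  linarith

lemma IsL1Density.sub {μ ν : SignedMeasure ℝ} {g h : ℝ → ℝ} (hg : IsL1Density μ g)
    (hh : IsL1Density ν h) : IsL1Density (μ - ν) (g - h) := by
  obtain ⟨hg_int, hg_supp, rfl⟩ := hg
  obtain ⟨hh_int, hh_supp, rfl⟩ := hh
  refine ⟨hg_int.sub hh_int, fun x hx => by simp [hg_supp x hx, hh_supp x hx], ?_⟩
  exact (withDensityᵥ_sub hg_int hh_int).symm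

namespace IsMarkov

variable {P : SignedMeasure ℝ →ₗ[ℝ] SignedMeasure ℝ}

lemma tvNorm_apply_le (hP : IsMarkov ⇑P) (m : SignedMeasure ℝ) : tvNorm (P m) ≤ tvNorm m := by
  have hmass (ρ : Measure ℝ) [IsFiniteMeasure ρ] :
      tvNorm (P ρ.toSignedMeasure) = ρ.real Set.univ := by
    rw [tvNorm_of_nonneg (hP.1 _ (VectorMeasure.le_iff'.1 (Measure.zero_le_toSignedMeasure ρ))),
      hP.2, Measure.toSignedMeasure_apply_measurable MeasurableSet.univ]
  have hPm : P m = P m.toJordanDecomposition.posPart.toSignedMeasure -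
      P m.toJordanDecomposition.negPart.toSignedMeasure := by
    rw [← map_sub]
    exact congrArg P m.toSignedMeasure_toJordanDecomposition.symm
  calc tvNorm (P m) ≤ tvNorm (P m.toJordanDecomposition.posPart.toSignedMeasure) +
        tvNorm (P m.toJordanDecomposition.negPart.toSignedMeasure) := hPm ▸ tvNorm_sub_le _ _
    _ = tvNorm m := by
        rw [hmass, hmass, tvNorm, SignedMeasure.totalVariation, measureReal_def, measureReal_def,
          Measure.add_apply, ENNReal.toReal_add (measure_ne_top _ _) (measure_ne_top _ _)]

lemma tvNorm_iterate_apply_le (hP : IsMarkov ⇑P) (n : ℕ) (m : SignedMeasure ℝ) :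
    tvNorm ((⇑P)^[n] m) ≤ tvNorm m := by
  induction n with
  | zero => rfl
  | succ n ih =>
    rw [Function.iterate_succ_apply']
    exact (hP.tvNorm_apply_le _).trans ih

lemma tvNorm_iterate_apply_sub_le (hP : IsMarkov ⇑P) (m : SignedMeasure ℝ) (n : ℕ) :
    tvNorm ((⇑P)^[n] m - m) ≤ tvNorm (P m - m) * n := by
  induction n with
  | zero => simp [tvNorm, SignedMeasure.totalVariation_zero]
  | succ n ih =>
    have hsplit : (⇑P)^[n + 1] m - m = (⇑P)^[n] (P m - m) + ((⇑P)^[n] m - m) := by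
      rw [Function.iterate_succ_apply, ← Module.End.coe_pow, map_sub]
      abel
    calc tvNorm ((⇑P)^[n + 1] m - m)
        ≤ tvNorm ((⇑P)^[n] (P m - m)) + tvNorm ((⇑P)^[n] m - m) := hsplit ▸ tvNorm_add_le _ _
      _ ≤ tvNorm (P m - m) + tvNorm (P m - m) * n :=
          add_le_add (hP.tvNorm_iterate_apply_le n _) ih
      _ = tvNorm (P m - m) * ↑(n + 1) := by push_cast; ring

lemma tvNorm_sub_le_of_isFixedPt (hP : IsMarkov ⇑P) {μ : SignedMeasure ℝ}
    (hμ : Function.IsFixedPt P μ) (ν : SignedMeasure ℝ) (N : ℕ) :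
    tvNorm (ν - μ) ≤ tvNorm ((⇑P)^[N] (ν - μ)) + tvNorm (P ν - ν) * N := by
  have hsplit : ν - μ = (⇑P)^[N] (ν - μ) - ((⇑P)^[N] ν - ν) := by
    rw [← Module.End.coe_pow, map_sub, Module.End.coe_pow, (hμ.iterate N).eq]
    abel
  calc tvNorm (ν - μ) ≤ tvNorm ((⇑P)^[N] (ν - μ)) + tvNorm ((⇑P)^[N] ν - ν) :=
        (congrArg tvNorm hsplit).trans_le (tvNorm_sub_le _ _)
    _ ≤ tvNorm ((⇑P)^[N] (ν - μ)) + tvNorm (P ν - ν) * N :=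
        by grw [hP.tvNorm_iterate_apply_sub_le ν N]

end IsMarkov

lemma tendsto_zero_of_forall_le_add_mul_natCast {α : Type*} {l : Filter α} {a b : α → ℝ}
    {u : ℕ → ℝ} (hu : Tendsto u atTop (nhds 0)) (hb : Tendsto b l (nhds 0))
    (ha : ∀ᶠ x in l, 0 ≤ a x) (hle : ∀ᶠ x in l, ∀ N : ℕ, a x ≤ u N + b x * N) :
    Tendsto a l (nhds 0) := by
  refine tendsto_order.2 ⟨fun ε hε => ha.mono fun x hx => hε.trans_le hx, fun ε hε => ?_⟩
  obtain ⟨N, hN⟩ := (hu.eventually (gt_mem_nhds (half_pos hε))).exists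
  have hbN : ∀ᶠ x in l, b x * N < ε / 2 :=
    (hb.mul_const (N : ℝ)).eventually (gt_mem_nhds (by rw [zero_mul]; exact half_pos hε))
  filter_upwards [hle, hbN] with x hx hxN
  linarith [hx N]

lemma tendsto_const_mul_exp_mul_natCast_atTop {c lam : ℝ} (hlam : lam < 0) :
    Tendsto (fun N : ℕ => c * Real.exp (lam * N)) atTop (nhds 0) := by
  simpa using (Real.tendsto_exp_atBot.comp
    (tendsto_natCast_atTop_atTop.const_mul_atTop_of_neg hlam)).const_mul c

/-- strong statistical stability: under the assumptions (LR0)–(LR3),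
`‖f_δ − f₀‖₁ → 0`; more precisely `‖f_δ − f₀‖₁ ≤ 2Ce^{λN} + ε_δ N` for every `N`,
where `ε_δ = ‖(L₀ − L_δ) f_δ‖₁`. -/
theorem strong_statistical_stability
    (δbar : ℝ) (hδbar : 0 < δbar)
    (L : ℝ → MeasureTheory.SignedMeasure ℝ →ₗ[ℝ] MeasureTheory.SignedMeasure ℝ)
    (hMarkov : ∀ δ ∈ Set.Ico (0:ℝ) δbar, IsMarkov ⇑(L δ))
    (f : ℝ → MeasureTheory.SignedMeasure ℝ) (M : ℝ)
    -- (LR0): fixed probability measures with uniformly bounded BV densities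
    (hfix : ∀ δ ∈ Set.Ico (0:ℝ) δbar, (L δ) (f δ) = f δ ∧ (∀ A : Set ℝ, 0 ≤ f δ A) ∧
      f δ Set.univ = 1 ∧ ∃ h : ℝ → ℝ, IsBVDensity (f δ) h ∧ bvNorm h ≤ M)
    -- exponential contraction of L₀ on zero-average L¹ densities (from mixing + regularization)
    (C lam : ℝ) (hC : 0 ≤ C) (hlam : lam < 0)
    (hcontr : ∀ (g : MeasureTheory.SignedMeasure ℝ) (h : ℝ → ℝ), IsL1Density g h →
      g Set.univ = 0 → ∀ n : ℕ, tvNorm ((⇑(L 0))^[n] g) ≤ C * Real.exp (lam * n) * tvNorm g)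
    -- (LR3): small perturbation
    (K' : ℝ)
    (hsmall : ∀ δ ∈ Set.Ico (0:ℝ) δbar, tvNorm ((L 0) (f δ) - (L δ) (f δ)) ≤ K' * δ) :
    (∀ δ ∈ Set.Ico (0:ℝ) δbar, ∀ N : ℕ,
      tvNorm (f δ - f 0) ≤ 2 * C * Real.exp (lam * N)
        + tvNorm ((L 0) (f δ) - (L δ) (f δ)) * N) ∧
    Filter.Tendsto (fun δ : ℝ => tvNorm (f δ - f 0)) (nhdsWithin 0 (Set.Ioi 0)) (nhds 0) := by
  have h0 : (0 : ℝ) ∈ Set.Ico 0 δbar := ⟨le_rfl, hδbar⟩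
  obtain ⟨hfix0, hpos0, hmass0, g0, hg0, -⟩ := hfix 0 h0
  have hbound : ∀ δ ∈ Set.Ico (0:ℝ) δbar, ∀ N : ℕ, tvNorm (f δ - f 0) ≤
      2 * C * Real.exp (lam * N) + tvNorm ((L 0) (f δ) - (L δ) (f δ)) * N := by
    intro δ hδ N
    obtain ⟨hfixδ, hposδ, hmassδ, gδ, hgδ, -⟩ := hfix δ hδ
    have hcontrδ := hcontr _ _ (hgδ.1.sub hg0.1) (by simp [hmassδ, hmass0]) N
    have htwo := tvNorm_sub_le_two hposδ hmassδ hpos0 hmass0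
    calc tvNorm (f δ - f 0)
        ≤ tvNorm ((⇑(L 0))^[N] (f δ - f 0)) + tvNorm ((L 0) (f δ) - f δ) * N :=
          (hMarkov 0 h0).tvNorm_sub_le_of_isFixedPt hfix0 (f δ) N
      _ ≤ 2 * C * Real.exp (lam * N) + tvNorm ((L 0) (f δ) - (L δ) (f δ)) * N := by
          rw [hfixδ, mul_assoc 2, mul_comm 2]
          gcongr
          exact hcontrδ.trans (mul_le_mul_of_nonneg_left htwo (mul_nonneg hC (Real.exp_pos _).le))
  have hIco : ∀ᶠ δ in nhdsWithin 0 (Set.Ioi 0), δ ∈ Set.Ico (0:ℝ) δbar :=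
    mem_of_superset (Ioo_mem_nhdsGT hδbar) Ioo_subset_Ico_self
  have hε : Tendsto (fun δ => tvNorm ((L 0) (f δ) - (L δ) (f δ))) (nhdsWithin 0 (Set.Ioi 0))
      (nhds 0) := by
    refine squeeze_zero' (Eventually.of_forall fun δ => tvNorm_nonneg _)
      (hIco.mono hsmall) ?_
    simpa using ((continuous_const_mul K').tendsto 0).mono_left nhdsWithin_le_nhds
  exact ⟨hbound, tendsto_zero_of_forall_le_add_mul_natCast
    (tendsto_const_mul_exp_mul_natCast_atTop hlam) hε
    (Eventually.of_forall fun δ => tvNorm_nonneg _) (hIco.mono hbound)⟩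
end
end

section
/- For f a finite signed Borel measure on [0,1] with f([0,1]) = 0 and g ∈ L¹([0,1]), the reflecting-boundary convolution satisfies ‖f ∗̂ g‖_W ≤ ‖f‖_W · ‖g‖₁. -/
open MeasureTheory Set Filter
open scoped ENNReal NNReal

noncomputable section

/-!
Testing `f ∗̂ g` against an admissible `φ` (`|φ| ≤ 1`, `Lip φ ≤ 1`) is testing `f ∗ g` against
`φ ∘ π`, which is admissible because `π` is the distance to `2ℤ`. By Fubini,
`∫ φ ∘ π d(f ∗ g) = ∫ K dg` with `K y = ∫ φ (π (x + y)) df(x)`, and every `x ↦ φ (π (x + y))` is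
again admissible, so `|K| ≤ ‖f‖_W` and the pairing is at most `‖f‖_W ‖g‖₁`.
-/

lemma reflMap_eq_infDist (x : ℝ) :
    reflMap x = Metric.infDist x (Set.range fun i : ℤ => 2 * (i : ℝ)) := by
  rw [Metric.infDist_eq_iInf, iInf_range']
  rfl

lemma reflMap_lipschitz : LipschitzWith 1 reflMap := by
  rw [funext reflMap_eq_infDist]
  exact Metric.lipschitz_infDist_pt _

section Pairing

variable {X : Type*} [MeasurableSpace X]

/-- The integral `∫ φ dm` against a finite signed measure. -/
def pairing (m : SignedMeasure X) (φ : X → ℝ) : ℝ :=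
  ∫ x, φ x ∂m.toJordanDecomposition.posPart - ∫ x, φ x ∂m.toJordanDecomposition.negPart

lemma integrable_of_abs_le (μ : Measure X) [IsFiniteMeasure μ] {φ : X → ℝ} {C : ℝ}
    (hφ : Measurable φ) (hb : ∀ x, |φ x| ≤ C) : Integrable φ μ :=
  .of_bound hφ.aestronglyMeasurable C (ae_of_all _ hb)

lemma pairing_neg (m : SignedMeasure X) (φ : X → ℝ) : pairing m (-φ) = -pairing m φ := by
  simp only [pairing, Pi.neg_apply, integral_neg]
  ring

lemma Measure.toSignedMeasure_map {Y : Type*} [MeasurableSpace Y] (μ : Measure X)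
    [IsFiniteMeasure μ] {T : X → Y} (hT : Measurable T) :
    μ.toSignedMeasure.map T = (μ.map T).toSignedMeasure := by
  ext s hs
  rw [VectorMeasure.map_apply _ hT hs, Measure.toSignedMeasure_apply_measurable (hT hs),
    Measure.toSignedMeasure_apply_measurable hs, measureReal_def, measureReal_def,
    Measure.map_apply hT hs]

lemma posPart_add_eq_negPart_add {m : SignedMeasure X} {A B : Measure X}
    [IsFiniteMeasure A] [IsFiniteMeasure B] (h : m = A.toSignedMeasure - B.toSignedMeasure) :
    m.toJordanDecomposition.posPart + B = A + m.toJordanDecomposition.negPart := by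
  rw [← Measure.toSignedMeasure_eq_toSignedMeasure_iff, Measure.toSignedMeasure_add,
    Measure.toSignedMeasure_add, ← sub_eq_sub_iff_add_eq_add, ← h]
  exact m.toSignedMeasure_toJordanDecomposition

lemma pairing_eq_of_eq_sub {m : SignedMeasure X} {A B : Measure X}
    [IsFiniteMeasure A] [IsFiniteMeasure B] (h : m = A.toSignedMeasure - B.toSignedMeasure)
    {φ : X → ℝ} {C : ℝ} (hφ : Measurable φ) (hb : ∀ x, |φ x| ≤ C) :
    pairing m φ = ∫ x, φ x ∂A - ∫ x, φ x ∂B := by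
  have hsum := congr_arg (fun μ => ∫ x, φ x ∂μ) (posPart_add_eq_negPart_add h)
  rw [integral_add_measure (integrable_of_abs_le _ hφ hb) (integrable_of_abs_le _ hφ hb),
    integral_add_measure (integrable_of_abs_le _ hφ hb) (integrable_of_abs_le _ hφ hb)] at hsum
  rw [pairing]
  linarith

lemma pairing_map {Y : Type*} [MeasurableSpace Y] (m : SignedMeasure X) {T : X → Y}
    (hT : Measurable T) {φ : Y → ℝ} {C : ℝ} (hφ : Measurable φ) (hb : ∀ y, |φ y| ≤ C) :
    pairing (m.map T) φ = pairing m (φ ∘ T) := by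
  have hdecomp : m.map T = (m.toJordanDecomposition.posPart.map T).toSignedMeasure -
      (m.toJordanDecomposition.negPart.map T).toSignedMeasure := by
    conv_lhs => rw [← m.toSignedMeasure_toJordanDecomposition]
    rw [JordanDecomposition.toSignedMeasure, ← VectorMeasure.mapₗ_apply (R := ℝ), map_sub,
      VectorMeasure.mapₗ_apply, VectorMeasure.mapₗ_apply, Measure.toSignedMeasure_map _ hT,
      Measure.toSignedMeasure_map _ hT]
  rw [pairing_eq_of_eq_sub hdecomp hφ hb, integral_map hT.aemeasurable hφ.aestronglyMeasurable,
    integral_map hT.aemeasurable hφ.aestronglyMeasurable, pairing, Function.comp_def]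

end Pairing

lemma tvNorm_eq_posPart_add_negPart (m : SignedMeasure ℝ) :
    tvNorm m = m.toJordanDecomposition.posPart.real univ +
      m.toJordanDecomposition.negPart.real univ := by
  rw [tvNorm, SignedMeasure.totalVariation, ← measureReal_def, measureReal_add_apply]

lemma abs_pairing_le (m : SignedMeasure ℝ) {φ : ℝ → ℝ} {C : ℝ} (hb : ∀ x, |φ x| ≤ C) :
    |pairing m φ| ≤ C * tvNorm m := by
  have hbound (μ : Measure ℝ) [IsFiniteMeasure μ] : |∫ x, φ x ∂μ| ≤ C * μ.real univ :=
    norm_integral_le_of_norm_le_const (f := φ) (ae_of_all _ hb)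
  rw [tvNorm_eq_posPart_add_negPart, mul_add]
  exact (abs_sub _ _).trans (add_le_add (hbound _) (hbound _))

instance : Nonempty {g : ℝ → ℝ // (∀ x, |g x| ≤ 1) ∧ LipschitzWith 1 g} :=
  ⟨⟨0, by simp, LipschitzWith.const' 0⟩⟩

lemma pairing_le_Wnorm (m : SignedMeasure ℝ) {φ : ℝ → ℝ} (hb : ∀ x, |φ x| ≤ 1)
    (hl : LipschitzWith 1 φ) : pairing m φ ≤ Wnorm m := by
  refine le_ciSup (f := fun g : {g : ℝ → ℝ // (∀ x, |g x| ≤ 1) ∧ LipschitzWith 1 g} =>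
    pairing m g.1) ⟨tvNorm m, ?_⟩ ⟨φ, hb, hl⟩
  rintro _ ⟨g, rfl⟩
  simpa using (le_abs_self _).trans (abs_pairing_le m g.2.1)

lemma abs_pairing_le_Wnorm (m : SignedMeasure ℝ) {φ : ℝ → ℝ} (hb : ∀ x, |φ x| ≤ 1)
    (hl : LipschitzWith 1 φ) : |pairing m φ| ≤ Wnorm m := by
  rw [abs_le, neg_le, ← pairing_neg]
  exact ⟨pairing_le_Wnorm m (by simpa using hb) hl.neg, pairing_le_Wnorm m hb hl⟩

lemma Wnorm_nonneg (m : SignedMeasure ℝ) : 0 ≤ Wnorm m :=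
  (abs_nonneg _).trans (abs_pairing_le_Wnorm m (φ := 0) (by simp) (LipschitzWith.const' 0))

lemma Wnorm_map_le (m : SignedMeasure ℝ) {T : ℝ → ℝ} (hT : LipschitzWith 1 T) :
    Wnorm (m.map T) ≤ Wnorm m := by
  refine ciSup_le fun ⟨φ, hb, hl⟩ => ?_
  change pairing (m.map T) φ ≤ _
  rw [pairing_map m hT.continuous.measurable hl.continuous.measurable hb]
  exact pairing_le_Wnorm m (φ := φ ∘ T) (fun x => hb (T x)) (by simpa using hl.comp hT)

section Convolution

variable {a c : Measure ℝ} [IsFiniteMeasure a] [IsFiniteMeasure c] {φ : ℝ → ℝ} {C : ℝ}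

lemma integrable_comp_add_prod (hφ : Measurable φ) (hb : ∀ x, |φ x| ≤ C) :
    Integrable (fun p : ℝ × ℝ => φ (p.1 + p.2)) (a.prod c) :=
  integrable_of_abs_le _ (hφ.comp (measurable_fst.add measurable_snd)) fun _ => hb _

lemma integral_posConv (hφ : Measurable φ) (hb : ∀ x, |φ x| ≤ C) :
    ∫ z, φ z ∂(posConv a c) = ∫ y, ∫ x, φ (x + y) ∂a ∂c := by
  rw [posConv, integral_map (φ := fun p : ℝ × ℝ => p.1 + p.2)
    (measurable_fst.add measurable_snd).aemeasurable hφ.aestronglyMeasurable]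
  exact integral_prod_symm _ (integrable_comp_add_prod hφ hb)

lemma pairing_mConv (f b : SignedMeasure ℝ) (hφ : Measurable φ) (hb : ∀ x, |φ x| ≤ C) :
    pairing (mConv f b) φ = pairing b fun y => pairing f fun x => φ (x + y) := by
  have hint (μ ν : Measure ℝ) [IsFiniteMeasure μ] [IsFiniteMeasure ν] :
      Integrable (fun y => ∫ x, φ (x + y) ∂μ) ν :=
    (integrable_comp_add_prod hφ hb).integral_prod_right
  rw [pairing_eq_of_eq_sub (m := mConv f b) rfl hφ hb]
  simp only [pairing]
  rw [integral_add_measure (integrable_of_abs_le _ hφ hb) (integrable_of_abs_le _ hφ hb),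
    integral_add_measure (integrable_of_abs_le _ hφ hb) (integrable_of_abs_le _ hφ hb),
    integral_posConv hφ hb, integral_posConv hφ hb, integral_posConv hφ hb,
    integral_posConv hφ hb, integral_sub (hint _ _) (hint _ _),
    integral_sub (hint _ _) (hint _ _)]
  ring

end Convolution

lemma Wnorm_mConv_le (f b : SignedMeasure ℝ) : Wnorm (mConv f b) ≤ Wnorm f * tvNorm b := by
  refine ciSup_le fun ⟨φ, hb, hl⟩ => ?_
  change pairing (mConv f b) φ ≤ _
  rw [pairing_mConv f b hl.continuous.measurable hb]
  refine (le_abs_self _).trans (abs_pairing_le b fun y => abs_pairing_le_Wnorm f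
    (fun x => hb (x + y)) ?_)
  simpa [Function.comp_def] using hl.comp (isometry_add_right y).lipschitz

lemma tvNorm_withDensityᵥ_le (μ : Measure ℝ) {g : ℝ → ℝ} (hg : Integrable g μ) :
    tvNorm (μ.withDensityᵥ g) ≤ ∫ x, |g x| ∂μ := by
  have hvar :
      SignedMeasure.totalVariation (μ.withDensityᵥ g) ≤ μ.withDensity fun x => ‖g x‖ₑ := by
    rw [SignedMeasure.totalVariation_eq_variation]
    refine VectorMeasure.variation_le_of_forall_enorm_le fun E hE => ?_
    rw [withDensityᵥ_apply hg hE, withDensity_apply _ hE]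
    exact enorm_integral_le_lintegral_enorm _
  have hfin : (μ.withDensity fun x => ‖g x‖ₑ) univ ≠ ∞ := by
    rw [withDensity_apply _ MeasurableSet.univ, Measure.restrict_univ]
    exact hg.2.ne
  calc tvNorm (μ.withDensityᵥ g) ≤ ((μ.withDensity fun x => ‖g x‖ₑ) univ).toReal :=
        ENNReal.toReal_mono hfin (hvar univ)
    _ = ∫ x, |g x| ∂μ := by
      rw [withDensity_apply _ MeasurableSet.univ, Measure.restrict_univ,
        ← integral_norm_eq_lintegral_enorm hg.1]
      rfl

theorem reflConv_Wnorm_bound_general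
    (f : MeasureTheory.SignedMeasure ℝ)
    (g : ℝ → ℝ) (hg : MeasureTheory.Integrable g MeasureTheory.volume)
    (hgsupp : ∀ x, x ∉ II → g x = 0) :
    Wnorm (reflConvM f (densSM g)) ≤ Wnorm f * ∫ x in II, |g x| := by
  have hgII : ∫ x in II, |g x| = ∫ x, |g x| :=
    setIntegral_eq_integral_of_forall_compl_eq_zero fun x hx => by simp [hgsupp x hx]
  calc Wnorm (reflConvM f (densSM g)) ≤ Wnorm (mConv f (densSM g)) :=
        Wnorm_map_le _ reflMap_lipschitz
    _ ≤ Wnorm f * tvNorm (densSM g) := Wnorm_mConv_le _ _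
    _ ≤ Wnorm f * ∫ x in II, |g x| := by
      rw [hgII]
      exact mul_le_mul_of_nonneg_left (tvNorm_withDensityᵥ_le _ hg) (Wnorm_nonneg f)

/-- for a zero-average finite signed measure `f` on `[0,1]` and `g ∈ L¹([0,1])`,
the reflecting-boundary convolution satisfies `‖f ∗̂ g‖_W ≤ ‖f‖_W · ‖g‖₁`. -/
theorem reflConv_Wnorm_bound
    (f : MeasureTheory.SignedMeasure ℝ)
    (hsupp : ∀ A : Set ℝ, MeasurableSet A → A ⊆ IIᶜ → f A = 0)
    (hzero : f II = 0)
    (g : ℝ → ℝ) (hg : MeasureTheory.Integrable g MeasureTheory.volume)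
    (hgsupp : ∀ x, x ∉ II → g x = 0) :
    Wnorm (reflConvM f (densSM g)) ≤ Wnorm f * ∫ x in II, |g x| :=
  reflConv_Wnorm_bound_general f g hg hgsupp
end
end
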